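/- Let l, d, k be positive integers with d ≤ l, k dividing l, and l dividing d·k. Set t = d·k/l and let p_1^{n_1}···p_m^{n_m} be the prime factorization of gcd(k, t) with M = {1,...,m}. Then the number of orbits of size exactly k of the shift map on d-element subsets of ZMod l equals (1/t) ∑_{S ⊆ M} (−1)^{|S|} C(k/∏_{i∈S} p_i − 1, t/∏_{i∈S} p_i − 1). -/

import Mathlib

/-! An orbit of size `k` consists of exactly `k` sets of minimal period `k`, so it suffices to
count `d`-sets by minimal period. For `j ∣ l`, a set is fixed by the `j`-fold shift iff it is the
preimage of a subset of `ZMod j` under reduction, and such a preimage of a `b`-set has `b·l/j`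
elements; so there are `C(j, dj/l)` such `d`-sets if `l ∣ dj` and none otherwise. Möbius inversion
over the divisors of `k` turns these counts into the number of `d`-sets of minimal period `k`, an
alternating sum over the squarefree divisors `q` of `k` in which only `q ∣ t` contribute, and
`t · C(k/q, t/q) = k · C(k/q - 1, t/q - 1)` gives the stated form. -/

/-- The shift map on finsets of `ZMod m`. -/
def sh (m : ℕ) (A : Finset (ZMod m)) : Finset (ZMod m) := A.image (· + 1)

/-- The orbit of a finset `A` of `ZMod m` under the shift map (note `(sh m)^[m] = id`). -/
def shOrbit (m : ℕ) [NeZero m] (A : Finset (ZMod m)) : Finset (Finset (ZMod m)) :=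
  (Finset.range m).image (fun i => (sh m)^[i] A)

/-- The number of orbits of size exactly `k` of the shift map on `d`-element subsets
of `ZMod m`. -/
def norb (m d k : ℕ) [NeZero m] : ℕ :=
  (((Finset.univ.filter (fun A : Finset (ZMod m) => A.card = d)).image
      (shOrbit m)).filter (fun O => O.card = k)).card

open Finset Function

namespace Function.IsPeriodicPt

variable {α : Type*} {f : α → α} {n : ℕ} {x y : α}

theorem mem_image_range_iterate_iff [DecidableEq α] (hx : IsPeriodicPt f n x) (hn : 0 < n) :
    y ∈ (range n).image (f^[·] x) ↔ ∃ i, f^[i] x = y := by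
  simp only [mem_image, mem_range]
  refine ⟨fun ⟨i, _, hi⟩ => ⟨i, hi⟩, fun ⟨i, hi⟩ => ⟨i % n, Nat.mod_lt i hn, ?_⟩⟩
  rw [hx.iterate_mod_apply, hi]

theorem image_range_iterate_iterate [DecidableEq α] (hx : IsPeriodicPt f n x) (hn : 0 < n)
    (i : ℕ) : (range n).image (f^[·] (f^[i] x)) = (range n).image (f^[·] x) := by
  ext y
  rw [mem_image_range_iterate_iff (hx.apply_iterate i) hn, mem_image_range_iterate_iff hx hn]
  refine ⟨fun ⟨j, hj⟩ => ⟨j + i, by rwa [iterate_add_apply]⟩, fun ⟨j, hj⟩ => ⟨j + (n - 1) * i, ?_⟩⟩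
  -- `(n - 1) * i` further steps complete `i` full periods
  have hcycle : j + (n - 1) * i + i = j + n * i := by
    rw [add_assoc, ← Nat.succ_mul, Nat.succ_eq_add_one, Nat.sub_add_cancel hn]
  rw [← iterate_add_apply, hcycle, iterate_add_apply, (hx.mul_const i).eq, hj]

theorem card_image_range_iterate [DecidableEq α] (hx : IsPeriodicPt f n x) (hn : 0 < n) :
    #((range n).image (f^[·] x)) = minimalPeriod f x := by
  have hmin := hx.minimalPeriod_pos hn
  have : (range n).image (f^[·] x) = (range (minimalPeriod f x)).image (f^[·] x) := by
    ext y
    rw [mem_image_range_iterate_iff hx hn,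
      mem_image_range_iterate_iff (isPeriodicPt_minimalPeriod f x) hmin]
  rw [this, card_image_of_injOn (by simpa using iterate_injOn_Iio_minimalPeriod), card_range]

end Function.IsPeriodicPt

section Shift

variable {l : ℕ}

theorem sh_iterate (i : ℕ) (A : Finset (ZMod l)) :
    (sh l)^[i] A = A.image (· + (i : ZMod l)) := by
  induction i with
  | zero => simp
  | succ i ih =>
    rw [iterate_succ_apply', ih, sh, image_image]
    congr 1
    ext x
    simp [add_assoc]

theorem card_sh_iterate (i : ℕ) (A : Finset (ZMod l)) : #((sh l)^[i] A) = #A := by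
  rw [sh_iterate]
  exact card_image_of_injective _ (add_left_injective _)

theorem isPeriodicPt_sh (A : Finset (ZMod l)) : IsPeriodicPt (sh l) l A := by
  simp [IsPeriodicPt, IsFixedPt, sh_iterate]

variable [NeZero l] {A B : Finset (ZMod l)}

theorem mem_shOrbit_iff : B ∈ shOrbit l A ↔ ∃ i, (sh l)^[i] A = B :=
  (isPeriodicPt_sh A).mem_image_range_iterate_iff (NeZero.pos l)

theorem mem_shOrbit_self (A : Finset (ZMod l)) : A ∈ shOrbit l A :=
  mem_shOrbit_iff.2 ⟨0, rfl⟩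

theorem card_shOrbit (A : Finset (ZMod l)) : #(shOrbit l A) = minimalPeriod (sh l) A :=
  (isPeriodicPt_sh A).card_image_range_iterate (NeZero.pos l)

theorem shOrbit_eq_of_mem (h : B ∈ shOrbit l A) : shOrbit l B = shOrbit l A := by
  obtain ⟨i, rfl⟩ := mem_shOrbit_iff.1 h
  exact (isPeriodicPt_sh A).image_range_iterate_iterate (NeZero.pos l) i

theorem card_eq_of_mem_shOrbit (h : B ∈ shOrbit l A) : #B = #A := by
  obtain ⟨i, rfl⟩ := mem_shOrbit_iff.1 h
  exact card_sh_iterate i A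

end Shift

section Counting

variable (l : ℕ) [NeZero l]

noncomputable def numPeriodicSets (d j : ℕ) : ℕ :=
  #{A : Finset (ZMod l) | #A = d ∧ (sh l)^[j] A = A}

noncomputable def numSetsOfMinimalPeriod (d j : ℕ) : ℕ :=
  #{A : Finset (ZMod l) | #A = d ∧ minimalPeriod (sh l) A = j}

variable {l}

theorem mul_norb_eq_numSetsOfMinimalPeriod (d k : ℕ) :
    k * norb l d k = numSetsOfMinimalPeriod l d k := by
  set s : Finset (Finset (ZMod l)) := {A | #A = d ∧ minimalPeriod (sh l) A = k}
  have horbits : (({A : Finset (ZMod l) | #A = d} : Finset _).image (shOrbit l)).filter (#· = k) =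
      s.image (shOrbit l) := by
    ext O
    simp only [s, mem_filter, mem_image, mem_univ, true_and]
    constructor
    · rintro ⟨⟨A, hA, rfl⟩, hk⟩
      exact ⟨A, ⟨hA, card_shOrbit A ▸ hk⟩, rfl⟩
    · rintro ⟨A, ⟨hA, hk⟩, rfl⟩
      exact ⟨⟨A, hA, rfl⟩, (card_shOrbit A).trans hk⟩
  have hfiber : ∀ O ∈ s.image (shOrbit l), #{A ∈ s | shOrbit l A = O} = k := by
    simp only [s, mem_image, mem_filter, mem_univ, true_and]
    rintro _ ⟨A, ⟨hA, hk⟩, rfl⟩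
    suffices {B ∈ s | shOrbit l B = shOrbit l A} = shOrbit l A by rw [this, card_shOrbit, hk]
    ext B
    simp only [s, mem_filter, mem_univ, true_and]
    refine ⟨fun ⟨_, hB⟩ => hB ▸ mem_shOrbit_self B, fun hB => ⟨⟨?_, ?_⟩, shOrbit_eq_of_mem hB⟩⟩
    · rw [card_eq_of_mem_shOrbit hB, hA]
    · rw [← card_shOrbit, shOrbit_eq_of_mem hB, card_shOrbit, hk]
  rw [norb, horbits, numSetsOfMinimalPeriod, card_eq_sum_card_image (shOrbit l) s,
    sum_congr rfl hfiber, sum_const, smul_eq_mul, mul_comm]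

theorem numPeriodicSets_eq_sum_divisors (d : ℕ) {n : ℕ} (hn : 0 < n) :
    numPeriodicSets l d n = ∑ i ∈ n.divisors, numSetsOfMinimalPeriod l d i := by
  have hmaps : ∀ A ∈ ({A | #A = d ∧ (sh l)^[n] A = A} : Finset (Finset (ZMod l))),
      minimalPeriod (sh l) A ∈ n.divisors := fun A hA =>
    Nat.mem_divisors.2 ⟨IsPeriodicPt.minimalPeriod_dvd (mem_filter.1 hA).2.2, hn.ne'⟩
  rw [numPeriodicSets, card_eq_sum_card_fiberwise hmaps]
  refine sum_congr rfl fun i hi => congrArg card ?_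
  ext A
  simp only [mem_filter, mem_univ, true_and]
  refine ⟨fun ⟨⟨hA, _⟩, hAi⟩ => ⟨hA, hAi⟩, fun ⟨hA, hAi⟩ => ⟨⟨hA, ?_⟩, hAi⟩⟩
  exact isPeriodicPt_iff_minimalPeriod_dvd.2 (hAi ▸ Nat.dvd_of_mem_divisors hi)

end Counting

def zmodPreimage {l j : ℕ} [NeZero l] (hj : j ∣ l) (B : Finset (ZMod j)) : Finset (ZMod l) :=
  {x | ZMod.castHom hj (ZMod j) x ∈ B}

section Reduction

variable {l j : ℕ} [NeZero l] (hj : j ∣ l)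
include hj

theorem mem_of_castHom_eq {A : Finset (ZMod l)} (hA : (sh l)^[j] A = A) {x y : ZMod l}
    (hxy : ZMod.castHom hj (ZMod j) x = ZMod.castHom hj (ZMod j) y) (hx : x ∈ A) : y ∈ A := by
  obtain ⟨m, hm⟩ : j ∣ (y - x).val := by
    rw [← ZMod.natCast_eq_zero_iff, ← map_natCast (ZMod.castHom hj (ZMod j)),
      ZMod.natCast_zmod_val, map_sub, hxy, sub_self]
  -- `A` is invariant under every multiple of `j`, in particular under `y - x`
  have hAm : (sh l)^[j * m] A = A := IsPeriodicPt.mul_const hA m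
  rw [sh_iterate, ← hm, ZMod.natCast_zmod_val] at hAm
  rw [← hAm]
  exact mem_image.2 ⟨x, hx, add_sub_cancel x y⟩

theorem zmodPreimage_image {A : Finset (ZMod l)} (hA : (sh l)^[j] A = A) :
    zmodPreimage hj (A.image (ZMod.castHom hj (ZMod j))) = A := by
  ext y
  simp only [zmodPreimage, mem_filter, mem_univ, true_and, mem_image]
  exact ⟨fun ⟨x, hx, hxy⟩ => mem_of_castHom_eq hj hA hxy hx, fun hy => ⟨y, hy, rfl⟩⟩

theorem image_zmodPreimage (B : Finset (ZMod j)) :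
    (zmodPreimage hj B).image (ZMod.castHom hj (ZMod j)) = B := by
  ext b
  simp only [zmodPreimage, mem_image, mem_filter, mem_univ, true_and]
  refine ⟨fun ⟨x, hx, hxb⟩ => hxb ▸ hx, fun hb => ?_⟩
  obtain ⟨x, rfl⟩ := ZMod.castHom_surjective hj b
  exact ⟨x, hb, rfl⟩

theorem sh_iterate_zmodPreimage (B : Finset (ZMod j)) :
    (sh l)^[j] (zmodPreimage hj B) = zmodPreimage hj B := by
  have hπj : ZMod.castHom hj (ZMod j) j = 0 := by rw [map_natCast, ZMod.natCast_self]
  ext x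
  simp only [zmodPreimage, sh_iterate, mem_image, mem_filter, mem_univ, true_and]
  refine ⟨fun ⟨y, hy, hyx⟩ => ?_, fun hx => ⟨x - j, ?_, sub_add_cancel x j⟩⟩
  · rwa [← hyx, map_add, hπj, add_zero]
  · rwa [map_sub, hπj, sub_zero]

variable [NeZero j]

theorem card_filter_castHom_eq (b : ZMod j) :
    #{x : ZMod l | ZMod.castHom hj (ZMod j) x = b} = l / j := by
  have hsurj := ZMod.castHom_surjective hj
  have hfiber : ∀ c : ZMod j, #{x : ZMod l | ZMod.castHom hj (ZMod j) x = c} =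
      #{x : ZMod l | ZMod.castHom hj (ZMod j) x = b} := fun c =>
    AddMonoidHom.card_fiber_eq_of_mem_range _ (hsurj c) (hsurj b)
  have htotal := card_eq_sum_card_fiberwise (s := (univ : Finset (ZMod l)))
    (t := univ) (f := ZMod.castHom hj (ZMod j)) (fun x _ => mem_univ _)
  simp only [card_univ, ZMod.card, sum_congr rfl fun c _ => hfiber c, sum_const,
    smul_eq_mul] at htotal
  exact (Nat.div_eq_of_eq_mul_right (NeZero.pos j) htotal).symm

theorem card_zmodPreimage (B : Finset (ZMod j)) : #(zmodPreimage hj B) = l / j * #B := by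
  have hmaps : ∀ x ∈ zmodPreimage hj B, ZMod.castHom hj (ZMod j) x ∈ B :=
    fun x hx => (mem_filter.1 hx).2
  rw [card_eq_sum_card_fiberwise hmaps, sum_congr rfl fun b hb => ?_, sum_const, smul_eq_mul,
    mul_comm]
  rw [← card_filter_castHom_eq hj b, zmodPreimage, filter_filter]
  congr 1
  ext x
  simp only [mem_filter, mem_univ, true_and, and_iff_right_iff_imp]
  exact fun hx => hx ▸ hb

theorem numPeriodicSets_eq_card (d : ℕ) :
    numPeriodicSets l d j = #{B : Finset (ZMod j) | l / j * #B = d} := by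
  refine card_nbij' (·.image (ZMod.castHom hj (ZMod j))) (zmodPreimage hj) ?_ ?_ ?_ ?_
  · intro A hA
    simp only [coe_filter, mem_univ, true_and, Set.mem_ofPred_eq] at hA ⊢
    rw [← card_zmodPreimage hj, zmodPreimage_image hj hA.2, hA.1]
  · intro B hB
    simp only [coe_filter, mem_univ, true_and, Set.mem_ofPred_eq] at hB ⊢
    exact ⟨(card_zmodPreimage hj B).trans hB, sh_iterate_zmodPreimage hj B⟩
  · intro A hA
    simp only [coe_filter, mem_univ, true_and, Set.mem_ofPred_eq] at hA
    exact zmodPreimage_image hj hA.2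
  · intro B _
    exact image_zmodPreimage hj B

end Reduction

open ArithmeticFunction in
theorem eq_sum_powerset_primeFactors_of_sum_divisors_eq {R : Type*} [Ring R] {f g : ℕ → R}
    (h : ∀ n > 0, ∑ i ∈ n.divisors, f i = g n) {n : ℕ} (hn : 0 < n) :
    f n = ∑ S ∈ n.primeFactors.powerset, (-1) ^ #S * g (n / S.prod id) := by
  have hsquarefree : ∑ i ∈ n.divisors with Squarefree i, (moebius i : R) * g (n / i) =
      ∑ i ∈ n.divisors, (moebius i : R) * g (n / i) :=
    sum_filter_of_ne fun i _ hi => by_contra fun hsq =>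
      hi (by rw [moebius_eq_zero_of_not_squarefree hsq, Int.cast_zero, zero_mul])
  rw [← (sum_eq_iff_sum_mul_moebius_eq.1 h) n hn,
    Nat.sum_divisorsAntidiagonal (fun a b => (moebius a : R) * g b), ← hsquarefree,
    Nat.sum_divisors_filter_squarefree hn.ne', Nat.factors_eq]
  refine sum_congr rfl fun S hS => ?_
  have hμ : moebius (S.prod id) = (-1) ^ #S := calc
    moebius (∏ p ∈ S, p) = ∏ p ∈ S, moebius p :=
      isMultiplicative_moebius.map_prod_of_subset_primeFactors n S (mem_powerset.1 hS)
    _ = ∏ _p ∈ S, -1 := prod_congr rfl fun p hp =>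
      moebius_apply_prime (Nat.prime_of_mem_primeFactors (mem_powerset.1 hS hp))
    _ = (-1) ^ #S := prod_const _
  rw [prod_val, hμ]
  push_cast
  rfl

theorem filter_powerset_primeFactors_prod_dvd {a b : ℕ} (ha : a ≠ 0) (hb : b ≠ 0) :
    {S ∈ a.primeFactors.powerset | S.prod id ∣ b} = (a.gcd b).primeFactors.powerset := by
  ext S
  simp only [mem_filter, mem_powerset, Nat.primeFactors_gcd ha hb, subset_inter_iff]
  refine and_congr_right fun hS => ⟨fun hdvd p hp => ?_, fun hSb => ?_⟩
  · exact Nat.mem_primeFactors.2 ⟨Nat.prime_of_mem_primeFactors (hS hp),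
      (dvd_prod_of_mem id hp).trans hdvd, hb⟩
  · exact prod_primes_dvd b (fun p hp => (Nat.prime_of_mem_primeFactors (hS hp)).prime)
      fun p hp => Nat.dvd_of_mem_primeFactors (hSb hp)

theorem card_filter_mul_card_eq {α : Type*} [Fintype α] {q : ℕ} (hq : 0 < q) (t : ℕ) :
    #{B : Finset α | q * #B = t} = if q ∣ t then (Fintype.card α).choose (t / q) else 0 := by
  split_ifs with hqt
  · obtain ⟨r, rfl⟩ := hqt
    simp only [Nat.mul_left_cancel_iff hq, Nat.mul_div_cancel_left _ hq, univ_filter_card_eq,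
      card_powersetCard, card_univ]
  · exact card_eq_zero.2 (filter_eq_empty_iff.2 fun B _ hB => hqt ⟨#B, hB.symm⟩)

theorem mul_choose_div_eq {a b q : ℕ} (ha : a ≠ 0) (hb : b ≠ 0) (hqa : q ∣ a) (hqb : q ∣ b) :
    b * (a / q).choose (b / q) = a * (a / q - 1).choose (b / q - 1) := by
  obtain ⟨a', rfl⟩ := hqa
  obtain ⟨b', rfl⟩ := hqb
  have hq : 0 < q := Nat.pos_of_ne_zero (left_ne_zero_of_mul ha)
  obtain ⟨a, rfl⟩ := Nat.exists_eq_add_one.2 (Nat.pos_of_ne_zero (right_ne_zero_of_mul ha))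
  obtain ⟨b, rfl⟩ := Nat.exists_eq_add_one.2 (Nat.pos_of_ne_zero (right_ne_zero_of_mul hb))
  simp only [Nat.mul_div_cancel_left _ hq, Nat.add_sub_cancel]
  rw [mul_assoc, mul_assoc, Nat.add_one_mul_choose_eq]
  ring

theorem numPeriodicSets_mul_div_eq {k m t q : ℕ} [NeZero (k * m)] (hqk : q ∣ k) :
    numPeriodicSets (k * m) (m * t) (k / q) = if q ∣ t then (k / q).choose (t / q) else 0 := by
  have hkm := NeZero.ne (k * m)
  obtain ⟨j, rfl⟩ := hqk
  have hq : 0 < q := Nat.pos_of_ne_zero (left_ne_zero_of_mul (left_ne_zero_of_mul hkm))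
  have : NeZero j := ⟨right_ne_zero_of_mul (left_ne_zero_of_mul hkm)⟩
  have hm : 0 < m := Nat.pos_of_ne_zero (right_ne_zero_of_mul hkm)
  have hquot : q * j * m / j = m * q := by
    rw [mul_comm q j, mul_assoc, Nat.mul_div_cancel_left _ (NeZero.pos j), mul_comm]
  rw [Nat.mul_div_cancel_left _ hq, numPeriodicSets_eq_card (Dvd.intro_left _ rfl |>.mul_right m),
    hquot]
  simp only [mul_assoc, Nat.mul_left_cancel_iff hm]
  rw [card_filter_mul_card_eq hq, ZMod.card]

theorem numSetsOfMinimalPeriod_eq_sum {k m t : ℕ} [NeZero (k * m)] (ht : t ≠ 0) :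
    (numSetsOfMinimalPeriod (k * m) (m * t) k : ℤ) = ∑ S ∈ (k.gcd t).primeFactors.powerset,
      (-1) ^ #S * ((k / S.prod id).choose (t / S.prod id) : ℤ) := by
  have hk : 0 < k := Nat.pos_of_ne_zero (left_ne_zero_of_mul (NeZero.ne (k * m)))
  rw [eq_sum_powerset_primeFactors_of_sum_divisors_eq
    (f := fun n => (numSetsOfMinimalPeriod (k * m) (m * t) n : ℤ))
    (g := fun n => (numPeriodicSets (k * m) (m * t) n : ℤ))
    (fun n hn => by exact_mod_cast (numPeriodicSets_eq_sum_divisors _ hn).symm) hk,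
    ← filter_powerset_primeFactors_prod_dvd hk.ne' ht, sum_filter]
  refine sum_congr rfl fun S hS => ?_
  have hSk : S.prod id ∣ k := (prod_dvd_prod_of_subset _ _ id (mem_powerset.1 hS)).trans
    (Nat.prod_primeFactors_dvd k)
  rw [numPeriodicSets_mul_div_eq hSk]
  split_ifs <;> simp

theorem mul_sum_powerset_choose_eq {k t : ℕ} (hk : k ≠ 0) (ht : t ≠ 0) :
    (t : ℤ) * ∑ S ∈ (k.gcd t).primeFactors.powerset,
      (-1) ^ #S * ((k / S.prod id).choose (t / S.prod id) : ℤ) =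
    k * ∑ S ∈ (k.gcd t).primeFactors.powerset,
      (-1) ^ #S * ((k / S.prod id - 1).choose (t / S.prod id - 1) : ℤ) := by
  simp only [mul_sum]
  refine sum_congr rfl fun S hS => ?_
  have hS : S.prod id ∣ k.gcd t :=
    (prod_dvd_prod_of_subset _ _ id (mem_powerset.1 hS)).trans (Nat.prod_primeFactors_dvd _)
  have := mul_choose_div_eq hk ht (hS.trans (Nat.gcd_dvd_left k t))
    (hS.trans (Nat.gcd_dvd_right k t))
  rw [mul_left_comm, mul_left_comm (k : ℤ)]
  congr 1
  exact_mod_cast this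

theorem norb_formula_general (l d k : ℕ) [NeZero l] (hd : 0 < d) (hk : 0 < k)
    (hkl : k ∣ l) (hld : l ∣ d * k) :
    ((d * k / l : ℕ) : ℤ) * (norb l d k : ℤ)
      = ∑ S ∈ (Nat.gcd k (d * k / l)).primeFactors.powerset,
          (-1) ^ S.card *
            (Nat.choose (k / S.prod id - 1) ((d * k / l) / S.prod id - 1) : ℤ) := by
  obtain ⟨m, rfl⟩ := hkl
  obtain ⟨t, rfl⟩ : m ∣ d := by
    rw [mul_comm d] at hld
    exact Nat.dvd_of_mul_dvd_mul_left hk hld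
  have ht : t ≠ 0 := right_ne_zero_of_mul hd.ne'
  have htk : m * t * k / (k * m) = t := by
    rw [show m * t * k = t * (k * m) by ring, Nat.mul_div_cancel _ (NeZero.pos (k * m))]
  rw [htk]
  refine mul_left_cancel₀ (Int.natCast_ne_zero.2 hk.ne') ?_
  rw [← mul_sum_powerset_choose_eq hk.ne' ht, ← numSetsOfMinimalPeriod_eq_sum (m := m) ht,
    ← mul_norb_eq_numSetsOfMinimalPeriod]
  push_cast
  ring

/-- Main theorem: with `t = d*k/l` and `p_1,…,p_m` the prime factors of `gcd(k,t)`,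
the number of orbits of size exactly `k` on `d`-subsets of `ZMod l` equals
`(1/t) ∑_{S ⊆ M} (−1)^{|S|} C(k/∏ p_i − 1, t/∏ p_i − 1)`. -/
theorem norb_formula (l d k : ℕ) [NeZero l] (hd : 0 < d) (hk : 0 < k) (hdl : d ≤ l)
    (hkl : k ∣ l) (hld : l ∣ d * k) :
    ((d * k / l : ℕ) : ℤ) * (norb l d k : ℤ)
      = ∑ S ∈ (Nat.gcd k (d * k / l)).primeFactors.powerset,
          (-1) ^ S.card *
            (Nat.choose (k / S.prod id - 1) ((d * k / l) / S.prod id - 1) : ℤ) :=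
  norb_formula_general l d k hd hk hkl hld
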